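/- Let A be an m×n real matrix with restricted isometry constant δ_{2k} < 1, let h ∈ ℝⁿ be k-sparse, y ∈ ℝᵐ, and ν' = y − Ah. Let v ∈ ℝⁿ be a k-sparse vector with support Γ = supp(v), and suppose x⁺ ∈ ℝⁿ satisfies supp(x⁺) ⊆ Γ and [Aᵀ(y − A x⁺)]_Γ = 0 (i.e., x⁺ solves the least-squares problem min{‖y − Az‖₂² : supp(z) ⊆ Γ}). Then ‖h − x⁺‖₂ ≤ (1/√(1−δ_{2k}²))·‖h − v‖₂ + (1/(1−δ_{2k}))·‖ν'‖₂. -/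

import Mathlib

/-!
Write `e = h - x⁺ = u + w` with `u = e_Γ` and `w = e_{Γᶜ} = (h - v)_{Γᶜ}`. The normal equations
say `⟨Au, Ae + ν'⟩ = 0`. Combined with the polarized RIP estimate
`|⟨Ax, Ay⟩ - ⟨x, y⟩| ≤ δ ‖x‖ ‖y‖` for `x, y` supported on `supp h ∪ Γ`, this gives
`‖u‖² ≤ δ ‖u‖ ‖e‖ + ‖Au‖ ‖ν'‖` (as `⟨u, e⟩ = ‖u‖²`) and `‖Au‖² ≤ ‖Au‖ ‖ν'‖ + δ ‖u‖ ‖w‖`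
(as `⟨u, w⟩ = 0`). With `σ = √(1 - δ²)`, since `‖e‖² = ‖u‖² + ‖w‖²` we have
`‖e‖ ≤ ‖w‖ / σ + (‖u‖ - δ ‖w‖ / σ)₊`, and the two inequalities bound the excess
`‖u‖ - δ ‖w‖ / σ` by `‖ν'‖ / (1 - δ)`.
-/

open Finset

noncomputable def nsq {ι : Type*} [Fintype ι] (x : ι → ℝ) : ℝ := ∑ i, (x i) ^ 2

noncomputable def n2 {ι : Type*} [Fintype ι] (x : ι → ℝ) : ℝ := Real.sqrt (nsq x)

noncomputable def supp {n : ℕ} (x : Fin n → ℝ) : Finset (Fin n) :=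
  Finset.univ.filter (fun i => x i ≠ 0)

def Sparse {n : ℕ} (k : ℕ) (x : Fin n → ℝ) : Prop := (supp x).card ≤ k

def restr {n : ℕ} (x : Fin n → ℝ) (T : Finset (Fin n)) : Fin n → ℝ :=
  fun i => if i ∈ T then x i else 0

def SatRIP {m n : ℕ} (A : Matrix (Fin m) (Fin n) ℝ) (q : ℕ) (δ : ℝ) : Prop :=
  ∀ z : Fin n → ℝ, Sparse q z →
    (1 - δ) * nsq z ≤ nsq (A.mulVec z) ∧ nsq (A.mulVec z) ≤ (1 + δ) * nsq z

/-- `δ` is the `q`-th order restricted isometry constant of `A`: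
the smallest `δ' ≥ 0` such that `(1-δ')‖z‖² ≤ ‖Az‖² ≤ (1+δ')‖z‖²` for all `q`-sparse `z`. -/
def IsRIC {m n : ℕ} (A : Matrix (Fin m) (Fin n) ℝ) (q : ℕ) (δ : ℝ) : Prop :=
  IsLeast {δ' : ℝ | 0 ≤ δ' ∧ SatRIP A q δ'} δ

/-- membership in `W^k`: binary vectors with exactly `k` entries equal to 1. -/
def InW {n : ℕ} (k : ℕ) (w : Fin n → ℝ) : Prop :=
  (∀ i, w i = 0 ∨ w i = 1) ∧ (Finset.univ.filter (fun i => w i = 1)).card = k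

/-- membership in the polytope `P^k`. -/
def InP {n : ℕ} (k : ℕ) (w : Fin n → ℝ) : Prop :=
  (∑ i, w i) = (k : ℝ) ∧ ∀ i, 0 ≤ w i ∧ w i ≤ 1

/-- `S` is an index set of the `k` largest absolute entries of `x`. -/
def IsTopK {n : ℕ} (x : Fin n → ℝ) (k : ℕ) (S : Finset (Fin n)) : Prop :=
  S.card = k ∧ ∀ i ∈ S, ∀ j ∉ S, |x j| ≤ |x i|

/-- `d` is a hard thresholding `H_k(z)` of `z`. -/
def IsHT {n : ℕ} (k : ℕ) (z d : Fin n → ℝ) : Prop :=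
  Sparse k d ∧ ∀ d' : Fin n → ℝ, Sparse k d' → n2 (z - d) ≤ n2 (z - d')

/-- `w 0, …, w (ω-1)` are successive compression minimizers at `x^p` (with `u^p = up`). -/
def SCM {m n : ℕ} (A : Matrix (Fin m) (Fin n) ℝ) (y : Fin m → ℝ) (k ω : ℕ)
    (up : Fin n → ℝ) (w : ℕ → Fin n → ℝ) : Prop :=
  ∀ j < ω, InP k (w j) ∧ ∀ v : Fin n → ℝ, InP k v →
    n2 (y - A.mulVec (up * (∏ l ∈ Finset.range j, w l) * w j)) ≤
    n2 (y - A.mulVec (up * (∏ l ∈ Finset.range j, w l) * v))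

/-- the `ℓ∞` norm of `x` restricted to `T` (zero if `T` is empty). -/
noncomputable def linfT {n : ℕ} (x : Fin n → ℝ) (T : Finset (Fin n)) : ℝ :=
  if h : T.Nonempty then T.sup' h (fun j => |x j|) else 0

open Matrix

section Norms

variable {ι : Type*} [Fintype ι]

theorem nsq_eq_dotProduct (x : ι → ℝ) : nsq x = x ⬝ᵥ x := by
  simp only [nsq, dotProduct, sq]

theorem nsq_nonneg (x : ι → ℝ) : 0 ≤ nsq x :=
  sum_nonneg fun _ _ => sq_nonneg _

theorem n2_nonneg (x : ι → ℝ) : 0 ≤ n2 x := Real.sqrt_nonneg _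

theorem n2_sq (x : ι → ℝ) : n2 x ^ 2 = nsq x := Real.sq_sqrt (nsq_nonneg x)

theorem n2_eq_zero {x : ι → ℝ} : n2 x = 0 ↔ x = 0 := by
  rw [n2, Real.sqrt_eq_zero (nsq_nonneg x), nsq,
    sum_eq_zero_iff_of_nonneg fun i _ => sq_nonneg (x i), funext_iff]
  simp

@[simp]
theorem n2_zero : n2 (0 : ι → ℝ) = 0 := n2_eq_zero.2 rfl

theorem nsq_smul (c : ℝ) (x : ι → ℝ) : nsq (c • x) = c ^ 2 * nsq x := by
  simp only [nsq, mul_sum, Pi.smul_apply, smul_eq_mul, mul_pow]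

theorem abs_dotProduct_le (x y : ι → ℝ) : |x ⬝ᵥ y| ≤ n2 x * n2 y := by
  rw [n2, n2, ← Real.sqrt_mul (nsq_nonneg x)]
  exact Real.abs_le_sqrt (sum_mul_sq_le_sq_mul_sq _ _ _)

end Norms

section Support

variable {n : ℕ}

theorem notMem_supp {x : Fin n → ℝ} {i : Fin n} : i ∉ supp x ↔ x i = 0 := by
  simp [supp]

theorem supp_subset_iff {x : Fin n → ℝ} {T : Finset (Fin n)} :
    supp x ⊆ T ↔ ∀ i ∉ T, x i = 0 :=
  ⟨fun h i hi => notMem_supp.1 (mt (@h i) hi),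
    fun h i hx => by_contra fun hi => notMem_supp.2 (h i hi) hx⟩

theorem sparse_of_supp_subset {q : ℕ} {x : Fin n → ℝ} {T : Finset (Fin n)}
    (h : supp x ⊆ T) (hT : T.card ≤ q) : Sparse q x :=
  (card_le_card h).trans hT

theorem supp_restr_subset (x : Fin n → ℝ) (T : Finset (Fin n)) : supp (restr x T) ⊆ supp x :=
  supp_subset_iff.2 fun i hi => by simp [restr, notMem_supp.1 hi]

end Support

section Restriction

variable {n : ℕ}

theorem restr_add_restr_compl (x : Fin n → ℝ) (T : Finset (Fin n)) :
    restr x T + restr x Tᶜ = x := by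
  ext i; by_cases hi : i ∈ T <;> simp [restr, hi]

theorem dotProduct_restr (x y : Fin n → ℝ) (T : Finset (Fin n)) :
    x ⬝ᵥ restr y T = restr x T ⬝ᵥ y := by
  refine sum_congr rfl fun i _ => ?_
  by_cases hi : i ∈ T <;> simp [restr, hi]

theorem restr_dotProduct_restr_compl (x y : Fin n → ℝ) (T : Finset (Fin n)) :
    restr x T ⬝ᵥ restr y Tᶜ = 0 :=
  sum_eq_zero fun i _ => by by_cases hi : i ∈ T <;> simp [restr, hi]

theorem restr_dotProduct_self (x : Fin n → ℝ) (T : Finset (Fin n)) :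
    restr x T ⬝ᵥ x = nsq (restr x T) := by
  refine sum_congr rfl fun i _ => ?_
  by_cases hi : i ∈ T <;> simp [restr, hi, sq]

theorem nsq_restr_add_nsq_restr_compl (x : Fin n → ℝ) (T : Finset (Fin n)) :
    nsq (restr x T) + nsq (restr x Tᶜ) = nsq x := by
  simp only [nsq, ← sum_add_distrib]
  refine sum_congr rfl fun i _ => ?_
  by_cases hi : i ∈ T <;> simp [restr, hi]

theorem n2_restr_le (x : Fin n → ℝ) (T : Finset (Fin n)) : n2 (restr x T) ≤ n2 x := by
  refine Real.sqrt_le_sqrt (sum_le_sum fun i _ => ?_)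
  by_cases hi : i ∈ T <;> simp [restr, hi, sq_nonneg]

theorem restr_compl_sub_of_supp_subset {x z : Fin n → ℝ} {T : Finset (Fin n)}
    (hz : supp z ⊆ T) : restr (x - z) Tᶜ = restr x Tᶜ := by
  ext i; by_cases hi : i ∈ T <;> simp [restr, hi, supp_subset_iff.1 hz i]

end Restriction

namespace SatRIP

variable {m n q : ℕ} {A : Matrix (Fin m) (Fin n) ℝ} {δ : ℝ} {T : Finset (Fin n)} {x y : Fin n → ℝ}

theorem abs_dotProduct_sub_le_half (hA : SatRIP A q δ) (hT : T.card ≤ q)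
    (hx : supp x ⊆ T) (hy : supp y ⊆ T) :
    |A *ᵥ x ⬝ᵥ A *ᵥ y - x ⬝ᵥ y| ≤ δ / 2 * (nsq x + nsq y) := by
  have hxy : ∀ i ∉ T, x i = 0 ∧ y i = 0 := fun i hi =>
    ⟨supp_subset_iff.1 hx i hi, supp_subset_iff.1 hy i hi⟩
  have hadd := hA (x + y) (sparse_of_supp_subset (supp_subset_iff.2 fun i hi => by
    simp [(hxy i hi).1, (hxy i hi).2]) hT)
  have hsub := hA (x - y) (sparse_of_supp_subset (supp_subset_iff.2 fun i hi => by
    simp [(hxy i hi).1, (hxy i hi).2]) hT)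
  simp only [nsq_eq_dotProduct, mulVec_add, mulVec_sub, add_dotProduct, dotProduct_add,
    sub_dotProduct, dotProduct_sub, dotProduct_comm y x, dotProduct_comm (A *ᵥ y)] at hadd hsub ⊢
  rw [abs_le]
  constructor <;> nlinarith

theorem abs_dotProduct_sub_le (hA : SatRIP A q δ) (hT : T.card ≤ q)
    (hx : supp x ⊆ T) (hy : supp y ⊆ T) :
    |A *ᵥ x ⬝ᵥ A *ᵥ y - x ⬝ᵥ y| ≤ δ * n2 x * n2 y := by
  rcases eq_or_lt_of_le (mul_nonneg (n2_nonneg x) (n2_nonneg y)) with h0 | hpos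
  · rcases mul_eq_zero.1 h0.symm with h | h <;> simp [n2_eq_zero.1 h]
  -- rescaling `x` and `y` to the same norm makes the bound of `abs_dotProduct_sub_le_half` sharp
  have h := hA.abs_dotProduct_sub_le_half hT (x := n2 y • x) (y := n2 x • y)
    ((supp_subset_iff.2 fun i hi => by simp [supp_subset_iff.1 hx i hi]))
    ((supp_subset_iff.2 fun i hi => by simp [supp_subset_iff.1 hy i hi]))
  simp only [mulVec_smul, smul_dotProduct, dotProduct_smul, nsq_smul, smul_eq_mul] at h
  simp only [← n2_sq] at h
  refine le_of_mul_le_mul_left ?_ hpos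
  calc n2 x * n2 y * |A *ᵥ x ⬝ᵥ A *ᵥ y - x ⬝ᵥ y|
      = |n2 x * (n2 y * (A *ᵥ x ⬝ᵥ A *ᵥ y)) - n2 x * (n2 y * (x ⬝ᵥ y))| := by
        rw [← abs_of_pos hpos, ← abs_mul]
        congr 1
        ring
    _ ≤ n2 x * n2 y * (δ * n2 x * n2 y) := h.trans_eq (by ring)

end SatRIP

theorem le_of_mul_add_le_mul_add {t s c : ℝ} (hs : 0 ≤ s) (hc : 0 ≤ c)
    (h : t * (t + c) ≤ s * (s + c)) : t ≤ s := by
  nlinarith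

theorem le_div_add_max_of_sq_eq {δ σ P W E : ℝ} (hσ : 0 < σ) (hδσ : δ ^ 2 + σ ^ 2 = 1)
    (hP : 0 ≤ P) (hW : 0 ≤ W) (hEPW : E ^ 2 = P ^ 2 + W ^ 2) :
    E ≤ W / σ + max (P - δ * W / σ) 0 := by
  refine le_of_pow_le_pow_left₀ two_ne_zero (by positivity) ?_
  have hWσ : (W / σ) ^ 2 = (δ * W / σ) ^ 2 + W ^ 2 := by
    field_simp; linear_combination (-W ^ 2) * hδσ
  rcases le_total (P - δ * W / σ) 0 with hZ | hZ
  · rw [max_eq_right hZ, add_zero, hWσ, hEPW]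
    gcongr
    linarith
  · rw [max_eq_left hZ, hEPW]
    have : δ * W / σ ≤ W / σ := by gcongr; nlinarith
    nlinarith

theorem le_inv_sqrt_mul_add_inv_mul_of_sq_le {δ P W E X U : ℝ} (hδ0 : 0 ≤ δ) (hδ1 : δ < 1)
    (hP : 0 ≤ P) (hW : 0 ≤ W) (hU : 0 ≤ U)
    (hEPW : E ^ 2 = P ^ 2 + W ^ 2) (h1 : P ^ 2 ≤ δ * P * E + X * U)
    (h2 : X ^ 2 ≤ X * U + δ * P * W) :
    E ≤ 1 / √(1 - δ ^ 2) * W + 1 / (1 - δ) * U := by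
  rw [one_div_mul_eq_div, one_div_mul_eq_div]
  set σ := √(1 - δ ^ 2)
  have hσ2 : σ ^ 2 = 1 - δ ^ 2 := Real.sq_sqrt (by nlinarith)
  have hσ0 : 0 < σ := Real.sqrt_pos.2 (by nlinarith)
  have hσ1 : σ ≤ 1 := Real.sqrt_le_one.2 (by nlinarith)
  -- `δ W / σ` is the largest value of `P` allowed when `U = 0`
  set Z := P - δ * W / σ with hZdef
  have hE_le : E ≤ W / σ + max Z 0 :=
    le_div_add_max_of_sq_eq hσ0 (by linarith) hP hW hEPW
  have hUδ : 0 ≤ U / (1 - δ) := div_nonneg hU (sub_nonneg.2 hδ1.le)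
  rcases le_total Z 0 with hZ | hZ
  · rw [max_eq_right hZ] at hE_le
    linarith
  rw [max_eq_left hZ] at hE_le
  have hPZ : Z + δ * W ≤ P := by
    have : δ * W ≤ δ * W / σ := le_div_self (by positivity) hσ0 hσ1
    linarith
  have hZX : (1 - δ) * Z * P ≤ X * U := by
    have hδPE := mul_le_mul_of_nonneg_left hE_le (by positivity : 0 ≤ δ * P)
    have : (1 - δ) * Z * P = P ^ 2 - δ * P * (W / σ + Z) := by rw [hZdef]; ring
    linarith
  have hZU : (1 - δ) * Z ≤ U := by
    rcases le_or_gt X P with hXP | hPX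
    · by_contra! hlt
      have hP0 : 0 < P := by nlinarith
      have : X * U ≤ P * U := mul_le_mul_of_nonneg_right hXP hU
      nlinarith [mul_lt_mul_of_pos_left hlt hP0]
    · have hXU : X ≤ U + δ * W := by
        have : δ * P * W ≤ δ * X * W := by gcongr
        exact le_of_mul_le_mul_left (by linarith) (hP.trans_lt hPX)
      refine le_of_mul_add_le_mul_add hU (by positivity : 0 ≤ δ * W) ?_
      calc (1 - δ) * Z * ((1 - δ) * Z + δ * W) ≤ (1 - δ) * Z * P := by gcongr; nlinarith
        _ ≤ X * U := hZX
        _ ≤ (U + δ * W) * U := mul_le_mul_of_nonneg_right hXU hU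
        _ = U * (U + δ * W) := mul_comm _ _
  have : Z ≤ U / (1 - δ) := by rw [le_div_iff₀ (by linarith)]; linarith
  linarith

theorem n2_le_of_dotProduct_mulVec_restr_eq_zero {m n q : ℕ} {A : Matrix (Fin m) (Fin n) ℝ}
    {δ : ℝ} (hA : SatRIP A q δ) (hδ0 : 0 ≤ δ) (hδ1 : δ < 1) {T Γ : Finset (Fin n)}
    (hT : T.card ≤ q) {e : Fin n → ℝ} {r : Fin m → ℝ} (he : supp e ⊆ T)
    (horth : A *ᵥ restr e Γ ⬝ᵥ (A *ᵥ e + r) = 0) :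
    n2 e ≤ 1 / √(1 - δ ^ 2) * n2 (restr e Γᶜ) + 1 / (1 - δ) * n2 r := by
  set u := restr e Γ
  set w := restr e Γᶜ
  have hu : supp u ⊆ T := (supp_restr_subset e Γ).trans he
  have hw : supp w ⊆ T := (supp_restr_subset e Γᶜ).trans he
  have hAe : A *ᵥ e = A *ᵥ u + A *ᵥ w := by rw [← mulVec_add, restr_add_restr_compl]
  have hue := hA.abs_dotProduct_sub_le hT hu he
  have huw := hA.abs_dotProduct_sub_le hT hu hw
  rw [restr_dotProduct_self, ← n2_sq] at hue
  rw [restr_dotProduct_restr_compl, sub_zero] at huw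
  have hr := abs_dotProduct_le (A *ᵥ u) r
  rw [dotProduct_add] at horth
  have hpyth : n2 e ^ 2 = n2 u ^ 2 + n2 w ^ 2 := by
    simp only [n2_sq, u, w, nsq_restr_add_nsq_restr_compl]
  have h1 : n2 u ^ 2 ≤ δ * n2 u * n2 e + n2 (A *ᵥ u) * n2 r := by
    linarith [abs_le.1 hue, abs_le.1 hr]
  have h2 : n2 (A *ᵥ u) ^ 2 ≤ n2 (A *ᵥ u) * n2 r + δ * n2 u * n2 w := by
    rw [n2_sq, nsq_eq_dotProduct]
    rw [hAe, dotProduct_add] at horth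
    linarith [abs_le.1 huw, abs_le.1 hr]
  exact le_inv_sqrt_mul_add_inv_mul_of_sq_le hδ0 hδ1 (n2_nonneg _) (n2_nonneg _) (n2_nonneg _)
    hpyth h1 h2

theorem stmt15 {m n : ℕ} (A : Matrix (Fin m) (Fin n) ℝ) (k : ℕ)
    (δ2k : ℝ) (hδ : IsRIC A (2 * k) δ2k) (hδlt : δ2k < 1)
    (h : Fin n → ℝ) (hh : Sparse k h) (y : Fin m → ℝ)
    (ν' : Fin m → ℝ) (hν' : ν' = y - A.mulVec h)
    (v : Fin n → ℝ) (hv : Sparse k v)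
    (xq : Fin n → ℝ) (hsupp : supp xq ⊆ supp v)
    (hls : restr (A.transpose.mulVec (y - A.mulVec xq)) (supp v) = 0) :
    n2 (h - xq) ≤ (1 / Real.sqrt (1 - δ2k ^ 2)) * n2 (h - v)
      + (1 / (1 - δ2k)) * n2 ν' := by
  obtain ⟨⟨hδ0, hRIP⟩, -⟩ := hδ
  have hT : (supp h ∪ supp v).card ≤ 2 * k :=
    (card_union_le _ _).trans (two_mul k ▸ add_le_add hh hv)
  have he : supp (h - xq) ⊆ supp h ∪ supp v := supp_subset_iff.2 fun i hi => by
    rw [mem_union, not_or] at hi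
    simp [notMem_supp.1 hi.1, supp_subset_iff.1 hsupp i hi.2]
  have horth : A *ᵥ restr (h - xq) (supp v) ⬝ᵥ (A *ᵥ (h - xq) + ν') = 0 := by
    rw [show A *ᵥ (h - xq) + ν' = y - A *ᵥ xq by rw [hν', mulVec_sub]; abel,
      dotProduct_comm, dotProduct_mulVec, ← mulVec_transpose, dotProduct_restr, hls,
      zero_dotProduct]
  calc n2 (h - xq)
      ≤ 1 / √(1 - δ2k ^ 2) * n2 (restr (h - xq) (supp v)ᶜ) + 1 / (1 - δ2k) * n2 ν' :=
        n2_le_of_dotProduct_mulVec_restr_eq_zero hRIP hδ0 hδlt hT he horth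
    _ ≤ 1 / √(1 - δ2k ^ 2) * n2 (h - v) + 1 / (1 - δ2k) * n2 ν' := by
        rw [restr_compl_sub_of_supp_subset hsupp, ← restr_compl_sub_of_supp_subset le_rfl]
        gcongr
        exact n2_restr_le _ _
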